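/- Let S be a semigroup that does not satisfy the identity x² = x³, i.e., there exists a ∈ S with a·a ≠ a·a·a. Then the set M = {(p₁, p₂, p₃, p₄) ∈ S⁴ | p₁ = p₂ or p₃ = p₄} is not an algebraic set over S. -/

import Mathlib

/-- A point `p : Fin n → S` satisfies the equation `(τ, σ)` if the evaluations of the two
terms (elements of the free semigroup on `n` generators) at `p` coincide. -/
def SatisfiesEquation {S : Type*} [Semigroup S] {n : ℕ}
    (e : FreeSemigroup (Fin n) × FreeSemigroup (Fin n)) (p : Fin n → S) : Prop :=
  FreeSemigroup.lift p e.1 = FreeSemigroup.lift p e.2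

/-- A set `Y ⊆ Sⁿ` is algebraic over `S` if it is the common solution set of some set of
equations in `n` variables over the language `{·}`. -/
def IsAlgebraicSet {S : Type*} [Semigroup S] {n : ℕ} (Y : Set (Fin n → S)) : Prop :=
  ∃ Eqs : Set (FreeSemigroup (Fin n) × FreeSemigroup (Fin n)),
    Y = {p | ∀ e ∈ Eqs, SatisfiesEquation e p}

/-!
Over a commutative semigroup, evaluating a term is multiplicative in the point, so every
algebraic set is closed under pointwise products. Restricting to the commutative subsemigroup
generated by `a`, the points `(a, a², a, a)` and `(a, a, a, a²)` lie in `M`, but their product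
`(a², a³, a², a³)` does not.
-/

namespace FreeSemigroup

theorem lift_comp_apply {α S T : Type*} [Semigroup S] [Semigroup T] (f : T →ₙ* S) (p : α → T)
    (w : FreeSemigroup α) : lift (f ∘ p) w = f (lift p w) :=
  DFunLike.congr_fun (lift_comp_of' (f.comp (lift p))) w

theorem lift_mul_apply {α T : Type*} [CommSemigroup T] (p q : α → T) (w : FreeSemigroup α) :
    lift (p * q) w = lift p w * lift q w :=
  w.recOnMul (fun _ => rfl) fun x y hx hy => by
    simp only [map_mul, hx, hy, mul_mul_mul_comm]

end FreeSemigroup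

section Algebraic

variable {S T : Type*} {n : ℕ}

theorem SatisfiesEquation.mul [CommSemigroup T] {e : FreeSemigroup (Fin n) × FreeSemigroup (Fin n)}
    {p q : Fin n → T} (hp : SatisfiesEquation e p) (hq : SatisfiesEquation e q) :
    SatisfiesEquation e (p * q) := by
  unfold SatisfiesEquation at *
  rw [FreeSemigroup.lift_mul_apply, FreeSemigroup.lift_mul_apply, hp, hq]

theorem satisfiesEquation_comp_iff [Semigroup S] [Semigroup T] {f : T →ₙ* S}
    (hf : Function.Injective f) (e : FreeSemigroup (Fin n) × FreeSemigroup (Fin n))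
    (p : Fin n → T) : SatisfiesEquation e (f ∘ p) ↔ SatisfiesEquation e p := by
  simp only [SatisfiesEquation, FreeSemigroup.lift_comp_apply, hf.eq_iff]

theorem IsAlgebraicSet.mul_mem [CommSemigroup T] {Y : Set (Fin n → T)} (hY : IsAlgebraicSet Y)
    {p q : Fin n → T} (hp : p ∈ Y) (hq : q ∈ Y) : p * q ∈ Y := by
  obtain ⟨Eqs, rfl⟩ := hY
  exact fun e he => (hp e he).mul (hq e he)

theorem IsAlgebraicSet.preimage_comp [Semigroup S] [Semigroup T] {Y : Set (Fin n → S)}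
    (hY : IsAlgebraicSet Y) {f : T →ₙ* S} (hf : Function.Injective f) :
    IsAlgebraicSet {p : Fin n → T | f ∘ p ∈ Y} := by
  obtain ⟨Eqs, rfl⟩ := hY
  exact ⟨Eqs, by simp only [Set.mem_ofPred_eq, satisfiesEquation_comp_iff hf]⟩

end Algebraic

theorem not_algebraic_of_sq_ne_cube {S : Type*} [Semigroup S]
    (h : ∃ a : S, a * a ≠ a * a * a) :
    ¬ IsAlgebraicSet {p : Fin 4 → S | p 0 = p 1 ∨ p 2 = p 3} := by
  obtain ⟨a, ha⟩ := h
  intro hM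
  let T := Subsemigroup.closure {a}
  have : IsMulCommutative T := Subsemigroup.isMulCommutative_closure S <| by
    rintro _ rfl _ rfl; rfl
  let α : T := ⟨a, Subsemigroup.subset_closure rfl⟩
  have hMT := hM.preimage_comp (f := MulMemClass.subtype T) Subtype.val_injective
  have hprod := open scoped IsMulCommutative in
    hMT.mul_mem (p := ![α, α * α, α, α]) (q := ![α, α, α, α * α]) (Or.inr rfl) (Or.inl rfl)
  rcases hprod with h01 | h23
  · exact ha h01
  · exact ha (h23.trans (mul_assoc a a a).symm)
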